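/- Let A = B([0,1]) = Bor([0,1])/J be the quotient of bounded Borel functions by those supported on a meager set. There exists f ∈ l₂(A)' with ⟨f, f⟩' ≥ 1 such that f·a ∈ l₂(A) for a ∈ A implies a = 0 (i.e. J_f = 0). -/

import Mathlib

/-!
Enumerate the rationals as `r₀, r₁, …` and put `f₀ = 1`, `f_{⟨m, j⟩ + 1} = 2⁻ᵐ · 1_{I_{m,j}}` with
`I_{m,j} = (r_m + 1/(j+2), r_m + 1/(j+1))`. For fixed `m` these intervals are disjoint, so
`Σ_k |f_k|² ≤ 1 + Σ_m 4⁻ᵐ` pointwise. If `a ≠ 0` on a non-meager set, then `|a| > δ` on a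
non-meager Borel set, which by the Baire property is comeager in some nonempty open set `U`.
`U` contains `I_{m,j}` for one `m` and all large `j`, so `|f_{⟨m,j⟩+1} a|² > 4⁻ᵐ δ²` on a non-meager
set: the terms of `Σ_k |f_k a|²` stay away from `0` in the quotient norm, and its partial sums are
not Cauchy.
-/

open Filter

/-- The quotient norm of (the class of) a bounded Borel function `ψ` in
`B(X) = Bor(X)/{functions with meager support}`: the infimum of the levels `t ≥ 0` such
that `|ψ| > t` only on a meager set. -/
noncomputable def quotNorm {X : Type*} [TopologicalSpace X] (ψ : X → ℝ) : ℝ :=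
  sInf {t : ℝ | 0 ≤ t ∧ IsMeagre {x : X | t < |ψ x|}}

open Set Function Nat

-- The bound `C` makes the set defining `quotNorm ψ` nonempty, so its `sInf` is not the junk `0`.
lemma le_quotNorm_of_not_isMeagre {X : Type*} [TopologicalSpace X] {ψ : X → ℝ} {C c : ℝ}
    (hC : ∀ x, |ψ x| ≤ C) (hc : ¬ IsMeagre {x | c < |ψ x|}) : c ≤ quotNorm ψ := by
  refine le_csInf ⟨max C 0, le_max_right C 0, ?_⟩ fun t ⟨_, ht⟩ => ?_
  · convert IsMeagre.empty
    exact eq_empty_of_forall_notMem fun x hx => (hC x).not_gt (hx.trans_le' (le_max_left C 0))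
  · by_contra! htc
    exact hc (ht.mono fun x hx => htc.trans hx)

lemma exists_pos_not_isMeagre_lt_norm {X E : Type*} [TopologicalSpace X] [NormedAddCommGroup E]
    {a : X → E} (h : ¬ IsMeagre {x | a x ≠ 0}) : ∃ δ > 0, ¬ IsMeagre {x | δ < ‖a x‖} := by
  by_contra! hall
  refine h ((isMeagre_iUnion fun k : ℕ => hall (1 / (k + 1)) (by positivity)).mono fun x hx => ?_)
  obtain ⟨k, hk⟩ := exists_nat_one_div_lt (norm_pos_iff.2 hx)
  exact mem_iUnion.2 ⟨k, hk⟩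

lemma BaireMeasurableSet.exists_isOpen_forall_not_isMeagre_inter {X : Type*} [TopologicalSpace X]
    [BaireSpace X] {s : Set X} (hs : BaireMeasurableSet s) (h : ¬ IsMeagre s) :
    ∃ U, IsOpen U ∧ U.Nonempty ∧ ∀ W, IsOpen W → W.Nonempty → W ⊆ U → ¬ IsMeagre (W ∩ s) := by
  obtain ⟨U, hU, hsU⟩ := hs.residualEq_isOpen
  have hUs : IsMeagre (U \ s) := hsU.mem_iff.mono fun x hx hxUs => hxUs.2 (hx.2 hxUs.1)
  have hsU' : IsMeagre (s \ U) := hsU.mem_iff.mono fun x hx hxsU => hxsU.2 (hx.1 hxsU.1)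
  refine ⟨U, hU, nonempty_iff_ne_empty.2 fun hU0 => h ?_, fun W hW hne hWU hWs => ?_⟩
  · simpa [hU0] using hsU'
  · refine not_isMeagre_of_isOpen hW hne <| (hWs.union hUs).mono fun x hx => ?_
    by_cases hxs : x ∈ s
    exacts [Or.inl ⟨hx, hxs⟩, Or.inr ⟨hWU hx, hxs⟩]

lemma exists_isOpen_subset_of_isOpen_subtype {X : Type*} [TopologicalSpace X] {s : Set X}
    (hs : s ⊆ closure (interior s)) {U : Set s} (hU : IsOpen U) (hne : U.Nonempty) :
    ∃ O : Set X, IsOpen O ∧ O.Nonempty ∧ O ⊆ s ∧ Subtype.val ⁻¹' O ⊆ U := by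
  obtain ⟨V, hV, rfl⟩ := isOpen_induced_iff.1 hU
  obtain ⟨x, hx⟩ := hne
  exact ⟨V ∩ interior s, hV.inter isOpen_interior, mem_closure_iff.1 (hs x.2) V hV hx,
    inter_subset_right.trans interior_subset, fun y hy => hy.1⟩

lemma DenseRange.exists_Ioo_subset {r : ℕ → ℝ} (hr : DenseRange r) {O : Set ℝ} (hO : IsOpen O)
    (hne : O.Nonempty) : ∃ m, ∃ ε > 0, Ioo (r m) (r m + ε) ⊆ O := by
  obtain ⟨a, b, hab, hO⟩ := hO.exists_Ioo_subset hne
  obtain ⟨m, hma, hmb⟩ := hr.exists_mem_open isOpen_Ioo (nonempty_Ioo.2 hab)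
  exact ⟨m, b - r m, sub_pos.2 hmb, (Ioo_subset_Ioo hma.le (by linarith)).trans hO⟩

def accumInterval (r : ℝ) (j : ℕ) : Set ℝ := Ioo (r + 1 / ((j : ℝ) + 2)) (r + 1 / ((j : ℝ) + 1))

lemma pairwise_disjoint_accumInterval (r : ℝ) : Pairwise (Disjoint on accumInterval r) := by
  have : Antitone fun j : ℕ => r + 1 / ((j : ℝ) + 1) := fun i j hij => by
    dsimp only
    gcongr
  convert this.pairwise_disjoint_on_Ioo_succ using 3 with j
  simp only [accumInterval, Order.succ_eq_add_one, Nat.cast_add, Nat.cast_one]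
  ring_nf

lemma accumInterval_nonempty (r : ℝ) (j : ℕ) : (accumInterval r j).Nonempty :=
  nonempty_Ioo.2 (by gcongr; linarith)

lemma accumInterval_subset_Ioo {r ε : ℝ} {j : ℕ} (hj : 1 / ((j : ℝ) + 1) < ε) :
    accumInterval r j ⊆ Ioo r (r + ε) :=
  Ioo_subset_Ioo (le_add_of_nonneg_right (by positivity)) (by linarith)

noncomputable def accumSeq (r : ℕ → ℝ) : ℕ → ℝ → ℂ
  | 0 => fun _ => 1
  | k + 1 => (accumInterval (r (unpair k).1) (unpair k).2).indicator
      fun _ => (((2 : ℝ)⁻¹ ^ (unpair k).1 : ℝ) : ℂ)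

lemma measurable_accumSeq (r : ℕ → ℝ) (n : ℕ) : Measurable (accumSeq r n) := by
  cases n with
  | zero => exact measurable_const
  | succ k => exact measurable_const.indicator measurableSet_Ioo

lemma norm_accumSeq_succ_sq (r : ℕ → ℝ) (k : ℕ) (x : ℝ) :
    ‖accumSeq r (k + 1) x‖ ^ 2 =
      (accumInterval (r (unpair k).1) (unpair k).2).indicator
        (fun _ => (4 : ℝ)⁻¹ ^ (unpair k).1) x := by
  by_cases hx : x ∈ accumInterval (r (unpair k).1) (unpair k).2
  · simp only [accumSeq, indicator_of_mem hx, Complex.norm_real, Real.norm_eq_abs, sq_abs]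
    rw [← pow_mul, mul_comm, pow_mul]
    norm_num
  · simp [accumSeq, hx]

lemma norm_accumSeq_pair_succ_sq {r : ℕ → ℝ} {m j : ℕ} {x : ℝ} (hx : x ∈ accumInterval (r m) j) :
    ‖accumSeq r (pair m j + 1) x‖ ^ 2 = (4 : ℝ)⁻¹ ^ m := by
  simp [norm_accumSeq_succ_sq, hx]

lemma norm_accumSeq_le_one (r : ℕ → ℝ) (n : ℕ) (x : ℝ) : ‖accumSeq r n x‖ ≤ 1 := by
  cases n with
  | zero => simp [accumSeq]
  | succ k =>
    refine (sq_le_one_iff₀ (norm_nonneg _)).1 ?_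
    rw [norm_accumSeq_succ_sq]
    exact indicator_apply_le' (fun _ => pow_le_one₀ (by norm_num) (by norm_num)) fun _ => zero_le_one

lemma sum_indicator_accumInterval_le (r : ℝ) (s : Finset ℕ) {c : ℝ} (hc : 0 ≤ c) (x : ℝ) :
    ∑ j ∈ s, (accumInterval r j).indicator (fun _ => c) x ≤ c := by
  rw [← Finset.indicator_biUnion_apply _ _ fun i _ j _ hij => pairwise_disjoint_accumInterval r hij]
  exact indicator_apply_le' (fun _ => le_rfl) fun _ => hc

lemma sum_norm_accumSeq_sq_le (r : ℕ → ℝ) (n : ℕ) (x : ℝ) :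
    ∑ k ∈ Finset.range n, ‖accumSeq r k x‖ ^ 2 ≤ 7 / 3 := by
  set g : ℕ × ℕ → ℝ := fun p => (accumInterval (r p.1) p.2).indicator (fun _ => (4 : ℝ)⁻¹ ^ p.1) x
  have hg : ∀ p, 0 ≤ g p := fun p => indicator_nonneg (fun _ _ => by positivity) _
  calc ∑ k ∈ Finset.range n, ‖accumSeq r k x‖ ^ 2
      ≤ ∑ k ∈ Finset.range (n + 1), ‖accumSeq r k x‖ ^ 2 :=
        Finset.sum_le_sum_of_subset_of_nonneg (by simp) fun _ _ _ => by positivity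
    _ = ∑ k ∈ Finset.range n, g (unpair k) + 1 := by
        rw [Finset.sum_range_succ']
        simp only [norm_accumSeq_succ_sq, g]
        simp [accumSeq]
    _ = ∑ p ∈ (Finset.range n).image unpair, g p + 1 := by
        rw [Finset.sum_image (g := unpair) fun a _ b _ hab => Nat.pairEquiv.symm.injective hab]
    _ ≤ ∑ p ∈ Finset.range n ×ˢ Finset.range n, g p + 1 := by
        refine add_le_add (Finset.sum_le_sum_of_subset_of_nonneg (fun p hp => ?_)
          fun p _ _ => hg p) le_rfl
        simp only [Finset.mem_image, Finset.mem_range, Finset.mem_product] at hp ⊢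
        obtain ⟨k, hk, rfl⟩ := hp
        exact ⟨(unpair_left_le k).trans_lt hk, (unpair_right_le k).trans_lt hk⟩
    _ ≤ ∑ m ∈ Finset.range n, (4 : ℝ)⁻¹ ^ m + 1 := by
        rw [Finset.sum_product]
        gcongr with m
        exact sum_indicator_accumInterval_le (r m) _ (c := (4 : ℝ)⁻¹ ^ m) (by positivity) x
    _ ≤ 4 / 3 + 1 := by
        gcongr
        simpa [← Finset.range_eq_Ico] using (geom_sum_Ico_le_of_lt_one (x := (4 : ℝ)⁻¹)
          (m := 0) (n := n) (by norm_num) (by norm_num)).trans_eq (by norm_num)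
    _ = 7 / 3 := by norm_num

lemma exists_pos_frequently_le_quotNorm_accumSeq_mul {r : ℕ → ℝ} (hr : DenseRange r)
    {a : Icc (0 : ℝ) 1 → ℂ} (ha : Measurable a) {C : ℝ} (hC : ∀ x, ‖a x‖ ≤ C)
    (hsupp : ¬ IsMeagre {x | a x ≠ 0}) :
    ∃ c > 0, ∃ᶠ n in atTop, c ≤ quotNorm fun x : Icc (0 : ℝ) 1 => ‖accumSeq r n x * a x‖ ^ 2 := by
  obtain ⟨δ, hδ, hT⟩ := exists_pos_not_isMeagre_lt_norm hsupp
  obtain ⟨U, hUo, hUne, hU⟩ := (measurableSet_lt measurable_const ha.norm).baireMeasurableSet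
    |>.exists_isOpen_forall_not_isMeagre_inter hT
  obtain ⟨O, hOo, hOne, hOI, hOU⟩ := exists_isOpen_subset_of_isOpen_subtype
    (by rw [interior_Icc, closure_Ioo zero_ne_one]) hUo hUne
  obtain ⟨m, ε, hε, hmO⟩ := hr.exists_Ioo_subset hOo hOne
  refine ⟨(4 : ℝ)⁻¹ ^ m * δ ^ 2, by positivity, frequently_atTop.2 fun N => ?_⟩
  obtain ⟨j, hjε, hjN⟩ := (tendsto_one_div_add_atTop_nhds_zero_nat.eventually (gt_mem_nhds hε)
    |>.and (eventually_ge_atTop N)).exists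
  have hJO : accumInterval (r m) j ⊆ O := (accumInterval_subset_Ioo hjε).trans hmO
  refine ⟨pair m j + 1, hjN.trans ((right_le_pair m j).trans (le_succ _)),
    le_quotNorm_of_not_isMeagre (C := C ^ 2) (fun x => ?_) fun h => ?_⟩
  · rw [abs_of_nonneg (by positivity), norm_mul]
    gcongr
    exact (mul_le_of_le_one_left (norm_nonneg _) (norm_accumSeq_le_one r _ x)).trans (hC x)
  · obtain ⟨y, hy⟩ := accumInterval_nonempty (r m) j
    refine hU (Subtype.val ⁻¹' accumInterval (r m) j) (isOpen_Ioo.preimage continuous_subtype_val)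
      ⟨⟨y, hOI (hJO hy)⟩, hy⟩ (fun x hx => hOU (hJO hx)) (h.mono ?_)
    rintro x ⟨hxJ, hxT⟩
    rw [mem_ofPred_eq, abs_of_nonneg (by positivity), norm_mul, mul_pow,
      norm_accumSeq_pair_succ_sq hxJ]
    gcongr
    exact hxT

theorem exists_dual_functional_with_Jf_zero :
    ∃ f : ℕ → (↥(Set.Icc (0 : ℝ) 1) → ℂ),
      (∀ n, Measurable (f n)) ∧
      (f 0 = fun _ => 1) ∧
      (∃ C : ℝ, ∀ (n : ℕ) (x : ↥(Set.Icc (0 : ℝ) 1)),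
        ∑ k ∈ Finset.range n, ‖f k x‖ ^ 2 ≤ C) ∧
      ∀ a : ↥(Set.Icc (0 : ℝ) 1) → ℂ, Measurable a → (∃ C : ℝ, ∀ x, ‖a x‖ ≤ C) →
        (∀ ε : ℝ, 0 < ε → ∃ N : ℕ, ∀ p q : ℕ, N ≤ p → N ≤ q →
          quotNorm ((fun x => ∑ k ∈ Finset.range p, ‖f k x * a x‖ ^ 2) -
                    (fun x => ∑ k ∈ Finset.range q, ‖f k x * a x‖ ^ 2)) < ε) →
        IsMeagre {x : ↥(Set.Icc (0 : ℝ) 1) | a x ≠ 0} := by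
  set r : ℕ → ℝ := (↑) ∘ (Denumerable.eqv ℚ).symm
  have hr : DenseRange r := by
    rw [DenseRange, (Denumerable.eqv ℚ).symm.surjective.range_comp]
    exact Rat.denseRange_cast
  refine ⟨fun n x => accumSeq r n x, fun n => (measurable_accumSeq r n).comp measurable_subtype_coe,
    rfl, ⟨7 / 3, fun n x => sum_norm_accumSeq_sq_le r n x⟩, ?_⟩
  rintro a ha ⟨C, hC⟩ hcauchy
  by_contra hsupp
  obtain ⟨c, hc, hfreq⟩ := exists_pos_frequently_le_quotNorm_accumSeq_mul hr ha hC hsupp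
  obtain ⟨N, hN⟩ := hcauchy c hc
  obtain ⟨n, hn, hnN⟩ := (hfreq.and_eventually (eventually_ge_atTop N)).exists
  have hstep :
      ((fun x : Icc (0 : ℝ) 1 => ∑ k ∈ Finset.range (n + 1), ‖accumSeq r k x * a x‖ ^ 2) -
      fun x : Icc (0 : ℝ) 1 => ∑ k ∈ Finset.range n, ‖accumSeq r k x * a x‖ ^ 2) =
      fun x : Icc (0 : ℝ) 1 => ‖accumSeq r n x * a x‖ ^ 2 := by
    ext x
    simp [Finset.sum_range_succ]
  exact (hN (n + 1) n (by omega) hnN).not_ge (hstep ▸ hn)
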